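/- For a piecewise affine path x on [0,T] with dx_t = a_n dt on [t_n, t_{n+1}) (partition 0 = t_0 ≤ t_1 ≤ ... ≤ t_N = T), the Chen series factorizes as a product of exponentials: 𝔖(x)_T = ∏_{n=0}^{N-1} exp((t_{n+1}-t_n) Σ_{i=0}^d a_n^i X_i) in ℝ[[X_0,...,X_d]], where a_n^0 = 1. -/

import Mathlib

open MeasureTheory intervalIntegral

/-- The algebra `ℝ[[X₀,…,X_d]]` of non-commutative formal power series,
encoded by coefficients indexed by words. -/
def NCSeries (d : ℕ) : Type := List (Fin (d + 1)) → ℝ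

/-- The unit `1` of `ℝ[[X₀,…,X_d]]`. -/
noncomputable def NCSeries.one {d : ℕ} : NCSeries d := fun w => if w = [] then 1 else 0

/-- The product in `ℝ[[X₀,…,X_d]]`. -/
noncomputable def NCSeries.mul {d : ℕ} (a b : NCSeries d) : NCSeries d := fun w =>
  ∑ k ∈ Finset.range (w.length + 1), a (w.take k) * b (w.drop k)

/-- Powers in `ℝ[[X₀,…,X_d]]`. -/
noncomputable def NCSeries.pow {d : ℕ} (a : NCSeries d) : ℕ → NCSeries d
  | 0 => NCSeries.one
  | k + 1 => NCSeries.mul a (NCSeries.pow a k)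

/-- The exponential `exp Y = Σ_{k ≥ 0} Y^k / k!` in `ℝ[[X₀,…,X_d]]` (for `Y` with zero
constant term the sum is finite on each coefficient). -/
noncomputable def NCSeries.exp {d : ℕ} (a : NCSeries d) : NCSeries d := fun w =>
  ∑ k ∈ Finset.range (w.length + 1), NCSeries.pow a k w / (Nat.factorial k : ℝ)

/-- Ordered product of a list of series, from left to right. -/
noncomputable def NCSeries.listProd {d : ℕ} : List (NCSeries d) → NCSeries d
  | [] => NCSeries.one
  | a :: l => NCSeries.mul a (NCSeries.listProd l)

/-- Iterated integral of an absolutely continuous path with derivative family `f`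
over the simplex `{s ≤ t₁ ≤ ⋯ ≤ t_k ≤ t}`, for the word `w = (i₁, …, i_k)`. -/
noncomputable def iterInt {d : ℕ} (f : Fin (d + 1) → ℝ → ℝ) :
    List (Fin (d + 1)) → ℝ → ℝ → ℝ
  | [], _, _ => 1
  | i :: w, s, t => ∫ u in s..t, f i u * iterInt f w u t

/-- The element `c (Σ_{i=0}^d aⁱ Xᵢ)` of `ℝ[[X₀,…,X_d]]`. -/
noncomputable def linearElt {d : ℕ} (c : ℝ) (a : Fin (d + 1) → ℝ) : NCSeries d := fun w =>
  match w with
  | [i] => c * a i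
  | _ => 0

/-!
On an interval where the derivative is a constant vector `b`, the iterated integral of a word
`w` is the volume `(t - s)^|w| / |w|!` of the simplex times `∏ b`, which is exactly the
coefficient of `w` in `exp ((t - s) Σ bⁱ Xᵢ)`. Chen's identity `𝔖_{s,t} = 𝔖_{s,m} 𝔖_{m,t}`,
obtained by splitting the outermost integral at `m`, then factors the Chen series over the
partition, one piece at a time.
-/

variable {d : ℕ}

theorem linearElt_of_length_ne_one {c : ℝ} {b : Fin (d + 1) → ℝ} {w : List (Fin (d + 1))}
    (hw : w.length ≠ 1) : linearElt c b w = 0 := by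
  match w with
  | [] => rfl
  | [_] => exact absurd rfl hw
  | _ :: _ :: _ => rfl

theorem NCSeries.mul_linearElt_nil (c : ℝ) (b : Fin (d + 1) → ℝ) (g : NCSeries d) :
    NCSeries.mul (linearElt c b) g [] = 0 := by
  simp [NCSeries.mul, linearElt]

theorem NCSeries.mul_linearElt_cons (c : ℝ) (b : Fin (d + 1) → ℝ) (g : NCSeries d)
    (i : Fin (d + 1)) (w : List (Fin (d + 1))) :
    NCSeries.mul (linearElt c b) g (i :: w) = c * b i * g w := by
  rw [NCSeries.mul, Finset.sum_eq_single_of_mem 1 (by simp)]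
  · simp [linearElt]
  · intro k hk hk1
    rw [linearElt_of_length_ne_one, zero_mul]
    simp only [Finset.mem_range, List.length_cons] at hk
    simp only [List.length_take, List.length_cons]
    omega

theorem NCSeries.pow_linearElt (c : ℝ) (b : Fin (d + 1) → ℝ) (k : ℕ) (w : List (Fin (d + 1))) :
    NCSeries.pow (linearElt c b) k w
      = if w.length = k then c ^ k * (w.map b).prod else 0 := by
  induction k generalizing w with
  | zero => cases w <;> simp [NCSeries.pow, NCSeries.one]
  | succ k ih =>
    cases w with
    | nil => simp [NCSeries.pow, NCSeries.mul_linearElt_nil]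
    | cons i w =>
      rw [NCSeries.pow, NCSeries.mul_linearElt_cons, ih]
      simp only [List.length_cons, List.map_cons, List.prod_cons, add_left_inj]
      split_ifs <;> ring

theorem NCSeries.exp_linearElt (c : ℝ) (b : Fin (d + 1) → ℝ) (w : List (Fin (d + 1))) :
    NCSeries.exp (linearElt c b) w
      = c ^ w.length * (w.map b).prod / w.length.factorial := by
  rw [NCSeries.exp, Finset.sum_eq_single_of_mem w.length (by simp)]
  · rw [NCSeries.pow_linearElt, if_pos rfl]
  · intro k _ hk
    rw [NCSeries.pow_linearElt, if_neg (Ne.symm hk), zero_div]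

noncomputable def chenSeries (f : Fin (d + 1) → ℝ → ℝ) (s t : ℝ) : NCSeries d :=
  fun w => iterInt f w s t

section Signature

variable {f : Fin (d + 1) → ℝ → ℝ}

theorem continuous_iterInt (hf : ∀ i, LocallyIntegrable (f i) volume)
    (w : List (Fin (d + 1))) (t : ℝ) : Continuous fun u => iterInt f w u t := by
  induction w with
  | nil => exact continuous_const
  | cons i w ih =>
    have hint : ∀ a b : ℝ, IntervalIntegrable (fun v => f i v * iterInt f w v t) volume a b :=
      fun a b => ((hf i).integrableOn_isCompact isCompact_uIcc).intervalIntegrable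
        |>.mul_continuousOn ih.continuousOn
    have hsymm : (fun u => iterInt f (i :: w) u t)
        = fun u => -∫ v in t..u, f i v * iterInt f w v t := by
      funext u
      rw [iterInt, intervalIntegral.integral_symm]
    rw [hsymm]
    exact (intervalIntegral.continuous_primitive hint t).neg

theorem intervalIntegrable_mul_iterInt (hf : ∀ i, LocallyIntegrable (f i) volume)
    (i : Fin (d + 1)) (w : List (Fin (d + 1))) (t a b : ℝ) :
    IntervalIntegrable (fun u => f i u * iterInt f w u t) volume a b :=
  ((hf i).integrableOn_isCompact isCompact_uIcc).intervalIntegrable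
    |>.mul_continuousOn (continuous_iterInt hf w t).continuousOn

theorem chenSeries_self (s : ℝ) : chenSeries f s s = NCSeries.one := by
  funext w
  cases w <;> simp [chenSeries, iterInt, NCSeries.one]

theorem chenSeries_mul (hf : ∀ i, LocallyIntegrable (f i) volume) (s m t : ℝ) :
    NCSeries.mul (chenSeries f s m) (chenSeries f m t) = chenSeries f s t := by
  funext w
  simp only [NCSeries.mul, chenSeries]
  induction w generalizing s with
  | nil => simp [iterInt]
  | cons i w ih =>
    have hsplit : iterInt f (i :: w) s t
        = (∫ u in s..m, f i u * iterInt f w u t) + iterInt f (i :: w) m t :=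
      (intervalIntegral.integral_add_adjacent_intervals
        (intervalIntegrable_mul_iterInt hf i w t s m)
        (intervalIntegrable_mul_iterInt hf i w t m t)).symm
    have hleft : ∫ u in s..m, f i u * iterInt f w u t
        = ∑ j ∈ Finset.range (w.length + 1),
            iterInt f (i :: w.take j) s m * iterInt f (w.drop j) m t := by
      simp only [← ih, Finset.mul_sum, ← mul_assoc]
      rw [intervalIntegral.integral_finsetSum fun j _ =>
        (intervalIntegrable_mul_iterInt hf i (w.take j) m s m).mul_const _]
      simp only [intervalIntegral.integral_mul_const, iterInt]
    rw [hsplit, hleft, List.length_cons, Finset.sum_range_succ']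
    simp [iterInt]

theorem chenSeries_eq_exp_of_const {b : Fin (d + 1) → ℝ} {s t : ℝ} (hst : s ≤ t)
    (hfb : ∀ u ∈ Set.Ico s t, ∀ i, f i u = b i) :
    chenSeries f s t = NCSeries.exp (linearElt (t - s) b) := by
  funext w
  rw [NCSeries.exp_linearElt, chenSeries]
  induction w generalizing s with
  | nil => simp [iterInt]
  | cons i w ih =>
    have hint : Set.EqOn (fun u => f i u * iterInt f w u t)
        (fun u => b i * ((w.map b).prod / w.length.factorial) * (t - u) ^ w.length)
        (Set.Ioo s t) := by
      intro u hu
      dsimp only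
      rw [hfb u (Set.Ioo_subset_Ico_self hu),
        ih hu.2.le fun v hv => hfb v ⟨hu.1.le.trans hv.1, hv.2⟩]
      ring
    rw [iterInt, intervalIntegral.integral_congr_Ioo_of_le hst hint,
      intervalIntegral.integral_const_mul,
      intervalIntegral.integral_comp_sub_left (fun x => x ^ w.length) t, sub_self,
      integral_pow, List.length_cons, List.map_cons, List.prod_cons, Nat.factorial_succ]
    push_cast
    field_simp
    ring

theorem chenSeries_eq_listProd_exp (hf : ∀ i, LocallyIntegrable (f i) volume) {N : ℕ}
    (a : Fin N → Fin (d + 1) → ℝ) (tt : Fin (N + 1) → ℝ) (hmono : Monotone tt)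
    (haff : ∀ n : Fin N, ∀ u ∈ Set.Ico (tt n.castSucc) (tt n.succ), ∀ i, f i u = a n i) :
    chenSeries f (tt 0) (tt (Fin.last N))
      = NCSeries.listProd (List.ofFn fun n : Fin N =>
          NCSeries.exp (linearElt (tt n.succ - tt n.castSucc) (a n))) := by
  induction N with
  | zero => exact chenSeries_self _
  | succ N ih =>
    have hfirst : chenSeries f (tt 0) (tt 1) = NCSeries.exp (linearElt (tt 1 - tt 0) (a 0)) :=
      chenSeries_eq_exp_of_const (hmono (Fin.zero_le 1)) (haff 0)
    have hrest := ih (fun n => a n.succ) (fun n => tt n.succ)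
      (hmono.comp Fin.strictMono_succ.monotone)
      fun n => by simpa only [Fin.succ_castSucc] using haff n.succ
    simp only [Fin.succ_zero_eq_one, Fin.succ_last, Fin.succ_castSucc] at hrest
    rw [List.ofFn_succ, NCSeries.listProd, ← chenSeries_mul hf _ (tt 1), hfirst, hrest]
    rfl

end Signature

theorem chen_series_piecewise_affine_general {d N : ℕ}
    (f : Fin (d + 1) → ℝ → ℝ) (a : Fin N → Fin (d + 1) → ℝ)
    (tt : Fin (N + 1) → ℝ) (T : ℝ)
    (hmono : Monotone tt) (h0 : tt 0 = 0) (hT : tt (Fin.last N) = T)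
    (hf : ∀ i, MeasureTheory.LocallyIntegrable (f i) volume)
    (haff : ∀ n : Fin N, ∀ u ∈ Set.Ico (tt n.castSucc) (tt n.succ), ∀ i, f i u = a n i) :
    (fun w => iterInt f w 0 T : NCSeries d)
      = NCSeries.listProd
          (List.ofFn fun n : Fin N =>
            NCSeries.exp (linearElt (tt n.succ - tt n.castSucc) (a n))) := by
  rw [← h0, ← hT]
  exact chenSeries_eq_listProd_exp hf a tt hmono haff

/-- **Chen series of a piecewise affine path as a product of exponentials.**
For a piecewise affine path `x` on `[0,T]` with `dx_t = a_n dt` on `[t_n, t_{n+1})`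
(partition `0 = t_0 ≤ ⋯ ≤ t_N = T`, with `a_n⁰ = 1` so that `x⁰_t = t`),
`𝔖(x)_T = ∏_{n=0}^{N-1} exp((t_{n+1} - t_n) Σ_{i=0}^d a_nⁱ Xᵢ)` in `ℝ[[X₀,…,X_d]]`. -/
theorem chen_series_piecewise_affine {d N : ℕ}
    (f : Fin (d + 1) → ℝ → ℝ) (a : Fin N → Fin (d + 1) → ℝ)
    (tt : Fin (N + 1) → ℝ) (T : ℝ)
    (hmono : Monotone tt) (h0 : tt 0 = 0) (hT : tt (Fin.last N) = T)
    (hf : ∀ i, MeasureTheory.LocallyIntegrable (f i) volume)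
    (ha0 : ∀ n, a n 0 = 1)
    (haff : ∀ n : Fin N, ∀ u ∈ Set.Ico (tt n.castSucc) (tt n.succ), ∀ i, f i u = a n i) :
    (fun w => iterInt f w 0 T : NCSeries d)
      = NCSeries.listProd
          (List.ofFn fun n : Fin N =>
            NCSeries.exp (linearElt (tt n.succ - tt n.castSucc) (a n))) :=
  chen_series_piecewise_affine_general f a tt T hmono h0 hT hf haff
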